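/- For the robot manipulator Cartesian-space dynamics defined by M_x = J^{-T} M J^{-1} and C_x = J^{-T}(C - M J^{-1} J̇) J^{-1}, if Ṁ(q) - 2C(q,q̇) is skew-symmetric (where Ṁ = d/dt [M(q(t))]), then Ṁ_x - 2C_x is also skew-symmetric. -/

import Mathlib

/-!
Rather than differentiating `J⁻¹`, differentiate the identity `Jᵀ Mₓ J = M`, which expresses `Ṁₓ`
through `Ṁ`, `J̇` and `Mₓ`. Substituting gives
`Ṁₓ - 2 Cₓ = J⁻ᵀ (Ṁ - 2 C) J⁻¹ + (Y - Yᵀ)` with `Y = Mₓ J̇ J⁻¹`, using that `Mₓ` is symmetric;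
both summands are skew-symmetric.
-/

open Matrix

section EntrywiseDerivative

variable {𝕜 : Type*} [NontriviallyNormedField 𝕜] {m n p : Type*} [Fintype n] {t₀ : 𝕜}

theorem hasDerivAt_matrix_mul {A : 𝕜 → Matrix m n 𝕜} {B : 𝕜 → Matrix n p 𝕜}
    {A' : Matrix m n 𝕜} {B' : Matrix n p 𝕜}
    (hA : ∀ i j, HasDerivAt (fun t => A t i j) (A' i j) t₀)
    (hB : ∀ i j, HasDerivAt (fun t => B t i j) (B' i j) t₀) (i : m) (k : p) :
    HasDerivAt (fun t => (A t * B t) i k) ((A' * B t₀ + A t₀ * B') i k) t₀ := by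
  simp only [mul_apply, Matrix.add_apply, ← Finset.sum_add_distrib]
  exact HasDerivAt.fun_sum fun j _ => (hA i j).fun_mul (hB j k)

theorem hasDerivAt_transpose_mul_mul {J X : 𝕜 → Matrix n n 𝕜} {J' X' : Matrix n n 𝕜}
    (hJ : ∀ i j, HasDerivAt (fun t => J t i j) (J' i j) t₀)
    (hX : ∀ i j, HasDerivAt (fun t => X t i j) (X' i j) t₀) (i k : n) :
    HasDerivAt (fun t => ((J t)ᵀ * X t * J t) i k)
      ((J'ᵀ * X t₀ * J t₀ + (J t₀)ᵀ * X' * J t₀ + (J t₀)ᵀ * X t₀ * J') i k) t₀ :=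
  (hasDerivAt_matrix_mul (hasDerivAt_matrix_mul (fun i j => hJ j i) hX) hJ i k).congr_deriv
    (by simp only [add_mul]; rfl)

theorem transpose_mul_mul_deriv_eq {J X M : 𝕜 → Matrix n n 𝕜} {J' X' M' : Matrix n n 𝕜}
    (hconj : ∀ t, (J t)ᵀ * X t * J t = M t)
    (hJ : ∀ i j, HasDerivAt (fun t => J t i j) (J' i j) t₀)
    (hX : ∀ i j, HasDerivAt (fun t => X t i j) (X' i j) t₀)
    (hM : ∀ i j, HasDerivAt (fun t => M t i j) (M' i j) t₀) :
    J'ᵀ * X t₀ * J t₀ + (J t₀)ᵀ * X' * J t₀ + (J t₀)ᵀ * X t₀ * J' = M' := by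
  ext i k
  exact (hasDerivAt_transpose_mul_mul hJ hX i k).unique (by simpa only [hconj] using hM i k)

end EntrywiseDerivative

section Congruence

variable {R n : Type*} [CommRing R] [Fintype n]

theorem transpose_conj_add_sub_transpose_eq_neg {S : Matrix n n R} (hS : Sᵀ = -S)
    (P Y : Matrix n n R) :
    (Pᵀ * S * P + (Y - Yᵀ))ᵀ = -(Pᵀ * S * P + (Y - Yᵀ)) := by
  simp only [transpose_add, transpose_sub, transpose_mul, transpose_transpose, hS]
  noncomm_ring

variable [DecidableEq n]

theorem transpose_mul_inv_conj_mul {J : Matrix n n R} (hJ : IsUnit J.det) (M : Matrix n n R) :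
    Jᵀ * (J⁻¹ᵀ * M * J⁻¹) * J = M := by
  rw [← mul_assoc, ← mul_assoc, ← transpose_mul, nonsing_inv_mul _ hJ, transpose_one, one_mul,
    mul_assoc, nonsing_inv_mul _ hJ, mul_one]

theorem sub_two_smul_eq_conj_add_sub_transpose {J M X J' M' X' C : Matrix n n R}
    (hJ : IsUnit J.det) (hM : Mᵀ = M) (hX : X = J⁻¹ᵀ * M * J⁻¹)
    (hderiv : J'ᵀ * X * J + Jᵀ * X' * J + Jᵀ * X * J' = M') :
    X' - 2 • (J⁻¹ᵀ * (C - M * J⁻¹ * J') * J⁻¹)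
      = J⁻¹ᵀ * (M' - 2 • C) * J⁻¹ + (X * J' * J⁻¹ - (X * J' * J⁻¹)ᵀ) := by
  have hXsym : Xᵀ = X := by
    simp only [hX, transpose_mul, transpose_transpose, hM, mul_assoc]
  have hr : J * J⁻¹ = 1 := mul_nonsing_inv J hJ
  have hl : J⁻¹ᵀ * Jᵀ = 1 := by rw [← transpose_mul, hr, transpose_one]
  have hX' : X' = J⁻¹ᵀ * M' * J⁻¹ - J⁻¹ᵀ * J'ᵀ * X - X * J' * J⁻¹ :=
    calc X' = J⁻¹ᵀ * Jᵀ * X' * (J * J⁻¹) := by rw [hl, hr, one_mul, mul_one]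
      _ = J⁻¹ᵀ * (J'ᵀ * X * J + Jᵀ * X' * J + Jᵀ * X * J') * J⁻¹
            - J⁻¹ᵀ * J'ᵀ * X * (J * J⁻¹) - J⁻¹ᵀ * Jᵀ * X * J' * J⁻¹ := by noncomm_ring
      _ = _ := by rw [hderiv, hr, hl]; noncomm_ring
  rw [hX', transpose_mul, transpose_mul, hXsym, hX]
  noncomm_ring

end Congruence

/-- skew-symmetry of `Ṁ_x - 2 C_x` in Cartesian space,
given skew-symmetry of `Ṁ - 2C` in joint space. All time derivatives are
taken entrywise at a fixed time `t₀`. -/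
theorem stmt_4 {n : ℕ} (t₀ : ℝ)
    (M C J : ℝ → Matrix (Fin n) (Fin n) ℝ)
    (M' J' Mx' : Matrix (Fin n) (Fin n) ℝ)
    (hMsym : ∀ t, (M t)ᵀ = M t)
    (hJinv : ∀ t, IsUnit (J t).det)
    (hM' : ∀ i j, HasDerivAt (fun t => M t i j) (M' i j) t₀)
    (hJ' : ∀ i j, HasDerivAt (fun t => J t i j) (J' i j) t₀)
    (hMx' : ∀ i j,
      HasDerivAt (fun t => (((J t)⁻¹)ᵀ * M t * (J t)⁻¹) i j) (Mx' i j) t₀)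
    (hskew : (M' - 2 • C t₀)ᵀ = -(M' - 2 • C t₀)) :
    let Cx := ((J t₀)⁻¹)ᵀ * (C t₀ - M t₀ * (J t₀)⁻¹ * J') * (J t₀)⁻¹
    (Mx' - 2 • Cx)ᵀ = -(Mx' - 2 • Cx) := by
  intro Cx
  have hderiv := transpose_mul_mul_deriv_eq
    (fun t => transpose_mul_inv_conj_mul (hJinv t) (M t)) hJ' hMx' hM'
  rw [sub_two_smul_eq_conj_add_sub_transpose (hJinv t₀) (hMsym t₀) rfl hderiv]
  exact transpose_conj_add_sub_transpose_eq_neg hskew _ _
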